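/- arXiv:math/0508186 — 2 statements merged into one kernel-verified Lean document; each statement's English description precedes it below -/
import Mathlib

section
/- Let E ⊆ ℤⁿ be an elementary set, i.e. a set defined by a finite system of non-strict linear inequalities with rational coefficients together with finitely many congruence conditions (conditions of the form h(x) ∈ ℤ for rational linear functions h). Then the image of E under the coordinate projection ℤⁿ → ℤⁿ⁻¹ (forgetting the last coordinate) is a finite union of elementary subsets of ℤⁿ⁻¹. -/
/-- A subset of `ℤⁿ` is *elementary* if it is defined by a finite system of non-strict
(possibly inhomogeneous) linear inequalities with rational coefficients together with
finitely many congruence conditions `h(x) ∈ ℤ` for rational affine-linear functions `h`. -/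
def IsElementary {n : ℕ} (E : Set (Fin n → ℤ)) : Prop :=
  ∃ (k m : ℕ) (a : Fin k → (Fin n → ℚ)) (b : Fin k → ℚ)
    (c : Fin m → (Fin n → ℚ)) (d : Fin m → ℚ),
    E = {x : Fin n → ℤ |
      (∀ i : Fin k, 0 ≤ (∑ j, a i j * (x j : ℚ)) + b i) ∧
      (∀ i : Fin m, ∃ z : ℤ, (∑ j, c i j * (x j : ℚ)) + d i = (z : ℚ))}

/-!
Over a point `y`, the fibre of an elementary set `E ⊆ ℤⁿ⁺¹` is the solution set of a system in
one integer unknown `t`: inequalities `0 ≤ Aᵢ(y) + αᵢ t` and congruences `Cⱼ(y) + γⱼ t ∈ ℤ`. If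
`M` clears the denominators of the `γⱼ`, the congruences are `M`-periodic in `t`, so the least
nonnegative solution lies within `M` of `0` or of a lower bound `-Aᵢ(y)/αᵢ` (symmetrically for
negative solutions). These anchors are rational affine in `y`, and one common denominator `D`
makes `D · anchor(y)` integral for all `y`; hence some solution has the form
`anchor(y) + j / D` with `|j| < M D`. For each of the finitely many choices of anchor and `j`,
substituting this affine function for `t` yields an elementary set of `y`.
-/

lemma exists_pos_nat_mul_eq_int {ι : Type*} [Finite ι] (q : ι → ℚ) :
    ∃ D : ℕ, 0 < D ∧ ∀ i, ∃ z : ℤ, (D : ℚ) * q i = z := by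
  have := Fintype.ofFinite ι
  refine ⟨∏ i, (q i).den, Finset.prod_pos fun i _ => (q i).pos, fun i => ?_⟩
  obtain ⟨s, hs⟩ := Finset.dvd_prod_of_mem (fun i => (q i).den) (Finset.mem_univ i)
  refine ⟨s * (q i).num, ?_⟩
  rw [hs, Nat.cast_mul, mul_comm ((q i).den : ℚ), mul_assoc, mul_comm _ (q i),
    Rat.mul_den_eq_num]
  push_cast
  rfl

lemma exists_pos_nat_mul_dotProduct_add_eq_int {ι : Type*} [Finite ι] {n : ℕ}
    (u : ι → Fin n → ℚ) (r : ι → ℚ) :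
    ∃ D : ℕ, 0 < D ∧
      ∀ i (y : Fin n → ℤ), ∃ z : ℤ, (D : ℚ) * (u i ⬝ᵥ (Int.cast ∘ y) + r i) = z := by
  obtain ⟨D, hD, hq⟩ := exists_pos_nat_mul_eq_int (Sum.elim (fun p : ι × Fin n => u p.1 p.2) r)
  refine ⟨D, hD, fun i y => ?_⟩
  choose z hz using hq
  refine ⟨∑ j, z (.inl (i, j)) * y j + z (.inr i), ?_⟩
  push_cast
  rw [← hz, mul_add, dotProduct, Finset.mul_sum]
  congr 1
  refine Finset.sum_congr rfl fun j _ => ?_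
  rw [← hz, ← mul_assoc]
  rfl

structure OneVarSystem (ι κ : Type*) where
  ineqConst : ι → ℚ
  ineqCoeff : ι → ℚ
  congrConst : κ → ℚ
  congrCoeff : κ → ℚ

namespace OneVarSystem

variable {ι κ : Type*} (S : OneVarSystem ι κ)

def IsSolution (t : ℤ) : Prop :=
  (∀ i, 0 ≤ S.ineqConst i + S.ineqCoeff i * t) ∧
    ∀ j, ∃ z : ℤ, S.congrConst j + S.congrCoeff j * t = z

-- `none` stands for the bound `0 ≤ t` that comes from splitting solutions by sign.
def anchor : Option ι → ℚ
  | none => 0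
  | some i => -S.ineqConst i / S.ineqCoeff i

def neg : OneVarSystem ι κ := ⟨S.ineqConst, -S.ineqCoeff, S.congrConst, -S.congrCoeff⟩

lemma isSolution_neg {t : ℤ} : S.neg.IsSolution t ↔ S.IsSolution (-t) := by
  simp [IsSolution, neg]

lemma anchor_neg (o : Option ι) : S.neg.anchor o = -S.anchor o := by
  cases o <;> simp [anchor, neg, div_neg]

variable {S} {M : ℕ}

lemma exists_solution_near_anchor_of_nonneg (hM : 0 < M)
    (hγ : ∀ j, ∃ z : ℤ, (M : ℚ) * S.congrCoeff j = z) {t : ℤ} (ht : S.IsSolution t)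
    (ht₀ : 0 ≤ t) : ∃ t', S.IsSolution t' ∧ ∃ o, |(t' : ℚ) - S.anchor o| < M := by
  obtain ⟨t', ⟨ht', ht'₀⟩, hmin⟩ :=
    Int.exists_least_of_bdd (P := fun t => S.IsSolution t ∧ 0 ≤ t) ⟨0, fun _ h => h.2⟩
      ⟨t, ht, ht₀⟩
  refine ⟨t', ht', ?_⟩
  have hMq : (0 : ℚ) < M := Nat.cast_pos.2 hM
  by_cases hsmall : t' < M
  · have ht'q : (0 : ℚ) ≤ t' := by exact_mod_cast ht'₀
    have hsmallq : (t' : ℚ) < M := by exact_mod_cast hsmall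
    exact ⟨none, abs_lt.2 ⟨by simp only [anchor]; linarith, by simpa only [anchor, sub_zero]⟩⟩
  -- By minimality `t' - M` is no solution, yet it satisfies the congruences; so a lower bound
  -- `-ineqConst i / ineqCoeff i` lies in `(t' - M, t']`.
  have hcongr : ∀ j, ∃ z : ℤ, S.congrConst j + S.congrCoeff j * ((t' - M : ℤ) : ℚ) = z := by
    intro j
    obtain ⟨z, hz⟩ := ht'.2 j
    obtain ⟨w, hw⟩ := hγ j
    exact ⟨z - w, by push_cast; linear_combination hz - hw⟩
  obtain ⟨i, hi⟩ : ∃ i, S.ineqConst i + S.ineqCoeff i * ((t' - M : ℤ) : ℚ) < 0 := by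
    by_contra! h
    have := hmin _ ⟨⟨h, hcongr⟩, by omega⟩
    omega
  have hle := ht'.1 i
  push_cast at hi
  have hα : 0 < S.ineqCoeff i := pos_of_mul_pos_left (by linarith : 0 < S.ineqCoeff i * M) hMq.le
  have hdist : (t' : ℚ) - S.anchor (some i) =
      (S.ineqConst i + S.ineqCoeff i * t') / S.ineqCoeff i := by
    simp only [anchor]
    field_simp
    ring
  refine ⟨some i, abs_lt.2 ⟨?_, ?_⟩⟩ <;> rw [hdist]
  · exact lt_of_lt_of_le (neg_neg_of_pos hMq) (div_nonneg hle hα.le)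
  · rw [div_lt_iff₀ hα]
    linarith

lemma exists_solution_near_anchor (hM : 0 < M)
    (hγ : ∀ j, ∃ z : ℤ, (M : ℚ) * S.congrCoeff j = z) {t : ℤ} (ht : S.IsSolution t) :
    ∃ t', S.IsSolution t' ∧ ∃ o, |(t' : ℚ) - S.anchor o| < M := by
  rcases le_total 0 t with ht₀ | ht₀
  · exact exists_solution_near_anchor_of_nonneg hM hγ ht ht₀
  have hγ' : ∀ j, ∃ z : ℤ, (M : ℚ) * S.neg.congrCoeff j = z := fun j => by
    obtain ⟨z, hz⟩ := hγ j
    exact ⟨-z, by simp [neg, hz]⟩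
  obtain ⟨t', ht', o, ho⟩ := exists_solution_near_anchor_of_nonneg hM hγ'
    (S.isSolution_neg.2 (by rwa [neg_neg])) (neg_nonneg.2 ht₀)
  refine ⟨-t', S.isSolution_neg.1 ht', o, ?_⟩
  rw [anchor_neg] at ho
  rw [← abs_neg]
  convert ho using 2
  push_cast
  ring

end OneVarSystem

section Elementary

variable {n k m : ℕ}

def elementarySet (a : Fin k → Fin n → ℚ) (b : Fin k → ℚ) (c : Fin m → Fin n → ℚ)
    (d : Fin m → ℚ) : Set (Fin n → ℤ) :=
  {x | (∀ i, 0 ≤ a i ⬝ᵥ (Int.cast ∘ x) + b i) ∧ ∀ i, ∃ z : ℤ, c i ⬝ᵥ (Int.cast ∘ x) + d i = z}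

lemma isElementary_iff {E : Set (Fin n → ℤ)} :
    IsElementary E ↔ ∃ (k m : ℕ) (a : Fin k → Fin n → ℚ) (b : Fin k → ℚ)
      (c : Fin m → Fin n → ℚ) (d : Fin m → ℚ), E = elementarySet a b c d :=
  Iff.rfl

lemma dotProduct_snoc (w : Fin (n + 1) → ℚ) (v : Fin n → ℚ) (s : ℚ) :
    w ⬝ᵥ Fin.snoc v s = Fin.init w ⬝ᵥ v + w (Fin.last n) * s := by
  simp [dotProduct, Fin.sum_univ_castSucc, Fin.init]

def graphPreimage (E : Set (Fin (n + 1) → ℤ)) (u : Fin n → ℚ) (r : ℚ) : Set (Fin n → ℤ) :=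
  {y | ∃ z : ℤ, u ⬝ᵥ (Int.cast ∘ y) + r = z ∧ Fin.snoc y z ∈ E}

lemma image_init_eq (E : Set (Fin (n + 1) → ℤ)) :
    (fun x : Fin (n + 1) → ℤ => x ∘ Fin.castSucc) '' E = {y | ∃ t : ℤ, Fin.snoc y t ∈ E} := by
  ext y
  constructor
  · rintro ⟨x, hx, rfl⟩
    refine ⟨x (Fin.last n), ?_⟩
    show Fin.snoc (Fin.init x) (x (Fin.last n)) ∈ E
    rwa [Fin.snoc_init_self]
  · rintro ⟨t, ht⟩
    exact ⟨Fin.snoc y t, ht, funext fun i => Fin.snoc_castSucc ..⟩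

variable (a : Fin k → Fin (n + 1) → ℚ) (b : Fin k → ℚ) (c : Fin m → Fin (n + 1) → ℚ)
  (d : Fin m → ℚ)

def fiberSystem (y : Fin n → ℤ) : OneVarSystem (Fin k) (Fin m) where
  ineqConst i := Fin.init (a i) ⬝ᵥ (Int.cast ∘ y) + b i
  ineqCoeff i := a i (Fin.last n)
  congrConst i := Fin.init (c i) ⬝ᵥ (Int.cast ∘ y) + d i
  congrCoeff i := c i (Fin.last n)

lemma snoc_mem_elementarySet_iff {y : Fin n → ℤ} {t : ℤ} :
    Fin.snoc y t ∈ elementarySet a b c d ↔ (fiberSystem a b c d y).IsSolution t := by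
  simp only [elementarySet, Set.mem_ofPred_eq, Fin.comp_snoc, dotProduct_snoc,
    OneVarSystem.IsSolution, fiberSystem, add_right_comm]

theorem IsElementary.graphPreimage {E : Set (Fin (n + 1) → ℤ)} (hE : IsElementary E)
    (u : Fin n → ℚ) (r : ℚ) : IsElementary (graphPreimage E u r) := by
  obtain ⟨k, m, a, b, c, d, rfl⟩ := isElementary_iff.1 hE
  have subst : ∀ (w : Fin (n + 1) → ℚ) (e : ℚ) (y : Fin n → ℤ),
      (Fin.init w + w (Fin.last n) • u) ⬝ᵥ (Int.cast ∘ y) + (e + w (Fin.last n) * r) =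
        Fin.init w ⬝ᵥ (Int.cast ∘ y) + e + w (Fin.last n) * (u ⬝ᵥ (Int.cast ∘ y) + r) := by
    intro w e y
    rw [add_dotProduct, smul_dotProduct, smul_eq_mul]
    ring
  refine isElementary_iff.2 ⟨k, m + 1, fun i => Fin.init (a i) + a i (Fin.last n) • u,
    fun i => b i + a i (Fin.last n) * r, Fin.cons u fun i => Fin.init (c i) + c i (Fin.last n) • u,
    Fin.cons r fun i => d i + c i (Fin.last n) * r, ?_⟩
  ext y
  simp only [_root_.graphPreimage, Set.mem_ofPred_eq, snoc_mem_elementarySet_iff]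
  simp only [elementarySet, OneVarSystem.IsSolution, fiberSystem, Set.mem_ofPred_eq,
    Fin.forall_fin_succ, Fin.cons_zero, Fin.cons_succ, subst]
  constructor
  · rintro ⟨z, hz, hsol⟩
    rw [hz]
    exact ⟨hsol.1, ⟨z, rfl⟩, hsol.2⟩
  · rintro ⟨hineq, ⟨z, hz⟩, hcongr⟩
    rw [hz] at hineq hcongr
    exact ⟨z, hz, hineq, hcongr⟩

def anchorCoeff : Option (Fin k) → Fin n → ℚ
  | none => 0
  | some i => -(a i (Fin.last n))⁻¹ • Fin.init (a i)

def anchorConst : Option (Fin k) → ℚ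
  | none => 0
  | some i => -b i / a i (Fin.last n)

lemma fiberSystem_anchor (y : Fin n → ℤ) (o : Option (Fin k)) :
    (fiberSystem a b c d y).anchor o =
      anchorCoeff a o ⬝ᵥ (Int.cast ∘ y) + anchorConst a b o := by
  cases o with
  | none => simp [OneVarSystem.anchor, anchorCoeff, anchorConst]
  | some i =>
    simp only [OneVarSystem.anchor, fiberSystem, anchorCoeff, anchorConst, smul_dotProduct,
      smul_eq_mul]
    ring

theorem image_init_elementarySet_eq_iUnion {M D : ℕ} (hM : 0 < M) (hD : 0 < D)
    (hγ : ∀ i, ∃ z : ℤ, (M : ℚ) * c i (Fin.last n) = z)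
    (hanchor : ∀ o (y : Fin n → ℤ), ∃ z : ℤ,
      (D : ℚ) * (anchorCoeff a o ⬝ᵥ (Int.cast ∘ y) + anchorConst a b o) = z) :
    (fun x : Fin (n + 1) → ℤ => x ∘ Fin.castSucc) '' elementarySet a b c d =
      ⋃ p : Option (Fin k) × Finset.Ioo (-(M * D : ℤ)) (M * D),
        graphPreimage (elementarySet a b c d) (anchorCoeff a p.1)
          (anchorConst a b p.1 + (p.2 : ℤ) / D) := by
  rw [image_init_eq]
  ext y
  simp only [graphPreimage, Set.mem_ofPred_eq, Set.mem_iUnion]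
  constructor
  · rintro ⟨t, ht⟩
    obtain ⟨t', ht', o, ho⟩ := OneVarSystem.exists_solution_near_anchor hM hγ
      ((snoc_mem_elementarySet_iff a b c d).1 ht)
    obtain ⟨w, hw⟩ := hanchor o y
    rw [fiberSystem_anchor] at ho
    have hDq : (0 : ℚ) < D := Nat.cast_pos.2 hD
    have hj : D * t' - w ∈ Finset.Ioo (-(M * D : ℤ)) (M * D) := by
      have : |((D * t' - w : ℤ) : ℚ)| < M * D := by
        push_cast
        rw [← hw, ← mul_sub, abs_mul, Nat.abs_cast, mul_comm]
        exact mul_lt_mul_of_pos_right ho hDq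
      rw [Finset.mem_Ioo, ← abs_lt]
      exact_mod_cast this
    refine ⟨(o, ⟨_, hj⟩), t', ?_, (snoc_mem_elementarySet_iff a b c d).2 ht'⟩
    push_cast
    rw [← hw]
    field_simp
    ring
  · rintro ⟨-, z, -, hz⟩
    exact ⟨z, hz⟩

end Elementary

/-- The projection of an elementary subset of `ℤ^{n+1}` to `ℤⁿ` (forgetting the last
coordinate) is a finite union of elementary subsets of `ℤⁿ`. -/
theorem stmt_0 (n : ℕ) (E : Set (Fin (n + 1) → ℤ)) (hE : IsElementary E) :
    ∃ (k : ℕ) (F : Fin k → Set (Fin n → ℤ)),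
      (∀ i, IsElementary (F i)) ∧
      (fun x : Fin (n + 1) → ℤ => x ∘ Fin.castSucc) '' E = ⋃ i, F i := by
  obtain ⟨k, m, a, b, c, d, rfl⟩ := isElementary_iff.1 hE
  obtain ⟨M, hM, hγ⟩ := exists_pos_nat_mul_eq_int fun i => c i (Fin.last n)
  obtain ⟨D, hD, hanchor⟩ :=
    exists_pos_nat_mul_dotProduct_add_eq_int (anchorCoeff a) (anchorConst a b)
  obtain ⟨N, ⟨e⟩⟩ := Finite.exists_equiv_fin (Option (Fin k) × Finset.Ioo (-(M * D : ℤ)) (M * D))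
  refine ⟨N, fun i => graphPreimage (elementarySet a b c d) (anchorCoeff a (e.symm i).1)
    (anchorConst a b (e.symm i).1 + ((e.symm i).2 : ℤ) / D), fun i => hE.graphPreimage _ _, ?_⟩
  rw [image_init_elementarySet_eq_iUnion a b c d hM hD hγ hanchor]
  exact e.symm.iSup_comp.symm
end

section
/- Let R be a root system in a Euclidean space V with Weyl group W, fixed positive Weyl chamber Δ and dominance order given by the dual cone. Let λ and μ be dominant weights, and write μ* = w₀(−μ) where w₀ is the longest Weyl group element. Then λ + β lies in Δ for every β in the convex hull of the Weyl orbit W·μ if and only if w(μ*) ≤_Δ λ for all w ∈ W, where η ≤_Δ ξ means ξ − η ∈ Δ. -/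
/-- Let `V` be a Euclidean space with Weyl group `W` (a group of linear automorphisms),
positive Weyl chamber `Δ` (a convex fundamental domain), and `w₀ ∈ W` the longest element.
For dominant weights `λ, μ` with `μ* = w₀(−μ)`: `λ + β ∈ Δ` for every `β` in the convex
hull of the orbit `W·μ` if and only if `w(μ*) ≤_Δ λ` for all `w ∈ W`, i.e.
`λ − w(μ*) ∈ Δ`. -/
theorem stmt_2 {V : Type*} [NormedAddCommGroup V] [InnerProductSpace ℝ V]
    (W : Subgroup (V ≃ₗ[ℝ] V)) (Δ : Set V) (hconv : Convex ℝ Δ)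
    (w₀ : V ≃ₗ[ℝ] V) (hw₀ : w₀ ∈ W)
    (lam μ : V) (hlam : lam ∈ Δ) (hμ : μ ∈ Δ)
    (μstar : V) (hμs : μstar = w₀ (-μ)) :
    (∀ β ∈ convexHull ℝ {v : V | ∃ w ∈ W, v = w μ}, lam + β ∈ Δ) ↔
      (∀ w ∈ W, lam - w μstar ∈ Δ) := by
  have mul_apply : ∀ (a b : V ≃ₗ[ℝ] V) (x : V), (a * b) x = a (b x) := fun _ _ _ => rfl
  have inv_apply : ∀ (a : V ≃ₗ[ℝ] V) (x : V), a⁻¹ x = a.symm x := fun _ _ => rfl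
  constructor
  · intro h w hw
    have hmem : (w * w₀) μ ∈ convexHull ℝ {v : V | ∃ w ∈ W, v = w μ} :=
      subset_convexHull ℝ _ ⟨w * w₀, W.mul_mem hw hw₀, rfl⟩
    have hkey : lam - w μstar = lam + (w * w₀) μ := by
      simp [hμs, sub_eq_add_neg, mul_apply]
    rw [hkey]
    exact h _ hmem
  · intro h β hβ
    have hsub : {v : V | ∃ w ∈ W, v = w μ} ⊆ (fun v => lam + v) ⁻¹' Δ := by
      rintro v ⟨w, hw, rfl⟩
      have hkey : lam + w μ = lam - (w * w₀⁻¹) μstar := by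
        simp [hμs, sub_eq_add_neg, mul_apply, inv_apply]
      simp only [Set.mem_preimage, hkey]
      exact h _ (W.mul_mem hw (W.inv_mem hw₀))
    exact convexHull_min hsub (hconv.translate_preimage_right lam) hβ
end
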